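/- Fix c ∈ K. Let D̃_t be the total derivative of the equation (dtmv): 𝔽̃¹ = 2ũ²₋₁·(ũ¹₀)² − 2c·ũ¹₀ − 2(ũ¹₁·ũ²₀·ũ¹₀ + ũ¹₁ − c·ũ¹₀ − α₀·ũ¹₀)/(ũ¹₀·ũ²₀ + 1), 𝔽̃² = 2ũ²₋₁ − 2α₀·ũ²₀ − 2(ũ²₀)²·(ũ¹₁·ũ²₀·ũ¹₀ + ũ¹₁ − c·ũ¹₀ − α₀·ũ¹₀)/(ũ¹₀·ũ²₀ + 1). Set Φ¹ = (ũ¹₁·ũ²₀·ũ¹₀ + ũ¹₁ − c·ũ¹₀ − α₀·ũ¹₀)/(ũ¹₀·ũ²₀ + 1) and Φ² = ũ²₋₁. Then Φ = (Φ¹, Φ²) is a Miura-type transformation from equation (dtmv) to the Konstantinou-Rizos–Mikhailov–Xenitidis equation, i.e., the identities D̃_t(Φ¹) = 2(S(Φ²)·(Φ¹)² + α₀·Φ¹ − S(Φ¹)) and D̃_t(Φ²) = 2(S⁻¹(Φ²) − S⁻¹(Φ¹)·(Φ²)² − α₋₁·Φ²) hold in F. -/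

import Mathlib

/-!
Writing `𝔽̃¹ = 2 (Φ² (ũ¹₀)² - c ũ¹₀ - Φ¹)` and `𝔽̃² = 2 (Φ² - Φ¹ (ũ²₀)² - α₀ ũ²₀)`, the second
identity is `S⁻¹` applied to the definition of `𝔽̃²`, and `D̃_t ũ¹₁ = S 𝔽̃¹` already supplies the
term `-2 S(Φ¹)` of the first. The rest of the first identity comes from differentiating
`Φ¹ d = ũ¹₁ d - (c + α₀) ũ¹₀` with `d = ũ¹₀ ũ²₀ + 1`, and cancelling `d ≠ 0`.
-/

open MvPolynomial

/-- Variables: `(none, ℓ)` is `α_ℓ`; `(some j, ℓ)` is `ũ^j_ℓ`. -/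
abbrev VarB := Option (Fin 2) × ℤ

/-- Polynomial ring over `K` in `α_ℓ`, `ũ¹_ℓ`, `ũ²_ℓ`. -/
abbrev PolyB (K : Type) [Field K] := MvPolynomial VarB K

/-- Field of rational functions over `K` in `α_ℓ`, `ũ¹_ℓ`, `ũ²_ℓ`. -/
abbrev FB (K : Type) [Field K] := FractionRing (PolyB K)

/-- The variable `α_ℓ` (playing the role of `α(n+ℓ)`). -/
noncomputable def al (K : Type) [Field K] (ℓ : ℤ) : FB K :=
  algebraMap (PolyB K) (FB K) (X (none, ℓ))

/-- The variable `ũ¹_ℓ`. -/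
noncomputable def V1 (K : Type) [Field K] (ℓ : ℤ) : FB K :=
  algebraMap (PolyB K) (FB K) (X (some 0, ℓ))

/-- The variable `ũ²_ℓ`. -/
noncomputable def V2 (K : Type) [Field K] (ℓ : ℤ) : FB K :=
  algebraMap (PolyB K) (FB K) (X (some 1, ℓ))

/-- `𝔽̃¹` of equation (dtmv). -/
noncomputable def Feqt1 (K : Type) [Field K] (c : K) : FB K :=
  2 * V2 K (-1) * (V1 K 0) ^ 2 - 2 * algebraMap K (FB K) c * V1 K 0 -
    2 * (V1 K 1 * V2 K 0 * V1 K 0 + V1 K 1 - algebraMap K (FB K) c * V1 K 0 -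
      al K 0 * V1 K 0) / (V1 K 0 * V2 K 0 + 1)

/-- `𝔽̃²` of equation (dtmv). -/
noncomputable def Feqt2 (K : Type) [Field K] (c : K) : FB K :=
  2 * V2 K (-1) - 2 * al K 0 * V2 K 0 -
    2 * (V2 K 0) ^ 2 * (V1 K 1 * V2 K 0 * V1 K 0 + V1 K 1 - algebraMap K (FB K) c * V1 K 0 -
      al K 0 * V1 K 0) / (V1 K 0 * V2 K 0 + 1)

/-- The first component `Φ¹` of the Miura-type transformation. -/
noncomputable def Phi1 (K : Type) [Field K] (c : K) : FB K :=
  (V1 K 1 * V2 K 0 * V1 K 0 + V1 K 1 - algebraMap K (FB K) c * V1 K 0 - al K 0 * V1 K 0) /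
    (V1 K 0 * V2 K 0 + 1)

/-- The second component `Φ² = ũ²₋₁` of the Miura-type transformation. -/
noncomputable def Phi2 (K : Type) [Field K] : FB K := V2 K (-1)

def Derivation.ofLeibniz {R A : Type*} [CommRing R] [CommRing A] [Algebra R A] (D : A → A)
    (hadd : ∀ x y, D (x + y) = D x + D y) (hmul : ∀ x y, D (x * y) = x * D y + D x * y)
    (hR : ∀ r : R, D (algebraMap R A r) = 0) : Derivation R A A :=
  Derivation.mk'
    { toFun := D
      map_add' := hadd
      map_smul' := fun r x => by simp [Algebra.smul_def, hmul, hR] }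
    fun a b => by simp [hmul, smul_eq_mul, mul_comm]

@[simp]
theorem Derivation.ofLeibniz_apply {R A : Type*} [CommRing R] [CommRing A] [Algebra R A]
    (D : A → A) (hadd : ∀ x y, D (x + y) = D x + D y)
    (hmul : ∀ x y, D (x * y) = x * D y + D x * y) (hR : ∀ r : R, D (algebraMap R A r) = 0)
    (x : A) : Derivation.ofLeibniz D hadd hmul hR x = D x :=
  rfl

theorem RingEquiv.symm_apply_of_shift {R : Type*} [Mul R] [Add R] (e : R ≃+* R) {f : ℤ → R}
    (hf : ∀ ℓ, e (f ℓ) = f (ℓ + 1)) (ℓ : ℤ) : e.symm (f ℓ) = f (ℓ - 1) := by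
  rw [e.symm_apply_eq, hf, sub_add_cancel]

section

variable {K : Type} [Field K] (c : K)

theorem V1_mul_V2_add_one_ne_zero (ℓ : ℤ) : V1 K ℓ * V2 K ℓ + 1 ≠ 0 := by
  have hpoly : (X (some 0, ℓ) * X (some 1, ℓ) + 1 : PolyB K) ≠ 0 := fun h => by
    simpa using congrArg constantCoeff h
  simpa [V1, V2] using
    (map_ne_zero_iff _ (IsFractionRing.injective (PolyB K) (FB K))).mpr hpoly

theorem Feqt1_eq_Phi :
    Feqt1 K c = 2 * (Phi2 K * V1 K 0 ^ 2 - algebraMap K (FB K) c * V1 K 0 - Phi1 K c) := by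
  rw [Feqt1, Phi1, Phi2]
  ring

theorem Feqt2_eq_Phi : Feqt2 K c = 2 * (Phi2 K - Phi1 K c * V2 K 0 ^ 2 - al K 0 * V2 K 0) := by
  rw [Feqt2, Phi1, Phi2]
  ring

theorem derivation_apply_Phi1 (S : FB K ≃+* FB K)
    (hSK : ∀ x : K, S (algebraMap K (FB K) x) = algebraMap K (FB K) x)
    (hSu1 : ∀ ℓ : ℤ, S (V1 K ℓ) = V1 K (ℓ + 1)) (hSu2 : ∀ ℓ : ℤ, S (V2 K ℓ) = V2 K (ℓ + 1))
    (D : Derivation K (FB K) (FB K)) (hDal : D (al K 0) = 0)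
    (hDu10 : D (V1 K 0) = Feqt1 K c) (hDu11 : D (V1 K 1) = S (Feqt1 K c))
    (hDu20 : D (V2 K 0) = Feqt2 K c) :
    D (Phi1 K c) = 2 * (S (Phi2 K) * Phi1 K c ^ 2 + al K 0 * Phi1 K c - S (Phi1 K c)) := by
  have hSPhi2 : S (Phi2 K) = V2 K 0 := by rw [Phi2, hSu2, neg_add_cancel]
  simp only [Feqt1_eq_Phi, map_mul, map_sub, map_pow, map_ofNat, hSPhi2, hSK, hSu1,
    zero_add] at hDu11
  rw [Feqt1_eq_Phi] at hDu10
  rw [Feqt2_eq_Phi] at hDu20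
  have hd := V1_mul_V2_add_one_ne_zero (K := K) 0
  have hPhi1 : Phi1 K c * (V1 K 0 * V2 K 0 + 1) =
      V1 K 1 * V2 K 0 * V1 K 0 + V1 K 1 - algebraMap K (FB K) c * V1 K 0 - al K 0 * V1 K 0 :=
    div_mul_cancel₀ _ hd
  have hDPhi1 := congrArg D hPhi1
  simp only [D.leibniz, map_add, map_sub, D.map_one_eq_zero, D.map_algebraMap, hDal, hDu10,
    hDu11, hDu20, smul_eq_mul] at hDPhi1
  rw [hSPhi2]
  apply mul_right_cancel₀ hd
  -- the coefficient of `hPhi1` collects the terms where `(ũ¹₁ - Φ¹) d = (c + α₀) ũ¹₀` was used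
  linear_combination hDPhi1 +
    2 * (algebraMap K (FB K) c - Phi2 K * V1 K 0 - V2 K 0 * V1 K 1) * hPhi1

theorem symm_apply_Feqt2 (S : FB K ≃+* FB K) (hSal : ∀ ℓ : ℤ, S (al K ℓ) = al K (ℓ + 1))
    (hSu2 : ∀ ℓ : ℤ, S (V2 K ℓ) = V2 K (ℓ + 1)) :
    S.symm (Feqt2 K c) =
      2 * (S.symm (Phi2 K) - S.symm (Phi1 K c) * Phi2 K ^ 2 - al K (-1) * Phi2 K) := by
  simp only [Feqt2_eq_Phi, map_mul, map_sub, map_pow, map_ofNat,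
    S.symm_apply_of_shift (f := al K) hSal, S.symm_apply_of_shift (f := V2 K) hSu2]
  rfl

end

theorem stmt_14_general (K : Type) [Field K] (c : K)
    (S : FB K ≃+* FB K)
    (hSK : ∀ x : K, S (algebraMap K (FB K) x) = algebraMap K (FB K) x)
    (hSal : ∀ ℓ : ℤ, S (al K ℓ) = al K (ℓ + 1))
    (hSu1 : ∀ ℓ : ℤ, S (V1 K ℓ) = V1 K (ℓ + 1))
    (hSu2 : ∀ ℓ : ℤ, S (V2 K ℓ) = V2 K (ℓ + 1))
    (Dt : FB K → FB K)
    (hDadd : ∀ x y, Dt (x + y) = Dt x + Dt y)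
    (hDmul : ∀ x y, Dt (x * y) = x * Dt y + Dt x * y)
    (hDK : ∀ x : K, Dt (algebraMap K (FB K) x) = 0)
    (hDal : ∀ ℓ : ℤ, Dt (al K ℓ) = 0)
    (hDu1 : ∀ ℓ : ℤ, Dt (V1 K ℓ) = (S ^ ℓ) (Feqt1 K c))
    (hDu2 : ∀ ℓ : ℤ, Dt (V2 K ℓ) = (S ^ ℓ) (Feqt2 K c)) :
    Dt (Phi1 K c) =
      2 * (S (Phi2 K) * (Phi1 K c) ^ 2 + al K 0 * Phi1 K c - S (Phi1 K c)) ∧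
    Dt (Phi2 K) =
      2 * (S.symm (Phi2 K) - S.symm (Phi1 K c) * (Phi2 K) ^ 2 - al K (-1) * Phi2 K) := by
  constructor
  · exact derivation_apply_Phi1 c S hSK hSu1 hSu2 (.ofLeibniz Dt hDadd hDmul hDK) (hDal 0)
      (by simpa using hDu1 0) (by simpa using hDu1 1) (by simpa using hDu2 0)
  · rw [Phi2, hDu2, zpow_neg_one]
    exact symm_apply_Feqt2 c S hSal hSu2

/-- `F` is the field of rational functions over a char-0 field `K` in `α_ℓ, ũ¹_ℓ, ũ²_ℓ`;
`S` is the field automorphism over `K` with `S(α_ℓ) = α_{ℓ+1}`, `S(ũ^j_ℓ) = ũ^j_{ℓ+1}`,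
and `D̃_t` is the total derivative of equation (dtmv) `∂_t ũ^j = 𝔽̃^j` (the unique
derivation with `D̃_t(α_ℓ) = 0`, `D̃_t(ũ^j_ℓ) = S^ℓ(𝔽̃^j)`); both are quantified by
these characterizing properties.  Claim: `Φ = (Φ¹, Φ²)` with
`Φ¹ = (ũ¹₁ũ²₀ũ¹₀ + ũ¹₁ − cũ¹₀ − α₀ũ¹₀)/(ũ¹₀ũ²₀ + 1)`, `Φ² = ũ²₋₁` is a Miura-type
transformation from (dtmv) to the Konstantinou-Rizos–Mikhailov–Xenitidis equation:
`D̃_t(Φ¹) = 2(S(Φ²)(Φ¹)² + α₀Φ¹ − S(Φ¹))` and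
`D̃_t(Φ²) = 2(S⁻¹(Φ²) − S⁻¹(Φ¹)(Φ²)² − α₋₁Φ²)`. -/
theorem stmt_14 (K : Type) [Field K] [CharZero K] (c : K)
    (S : FB K ≃+* FB K)
    (hSK : ∀ x : K, S (algebraMap K (FB K) x) = algebraMap K (FB K) x)
    (hSal : ∀ ℓ : ℤ, S (al K ℓ) = al K (ℓ + 1))
    (hSu1 : ∀ ℓ : ℤ, S (V1 K ℓ) = V1 K (ℓ + 1))
    (hSu2 : ∀ ℓ : ℤ, S (V2 K ℓ) = V2 K (ℓ + 1))
    (Dt : FB K → FB K)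
    (hDadd : ∀ x y, Dt (x + y) = Dt x + Dt y)
    (hDmul : ∀ x y, Dt (x * y) = x * Dt y + Dt x * y)
    (hDK : ∀ x : K, Dt (algebraMap K (FB K) x) = 0)
    (hDal : ∀ ℓ : ℤ, Dt (al K ℓ) = 0)
    (hDu1 : ∀ ℓ : ℤ, Dt (V1 K ℓ) = (S ^ ℓ) (Feqt1 K c))
    (hDu2 : ∀ ℓ : ℤ, Dt (V2 K ℓ) = (S ^ ℓ) (Feqt2 K c)) :
    Dt (Phi1 K c) =
      2 * (S (Phi2 K) * (Phi1 K c) ^ 2 + al K 0 * Phi1 K c - S (Phi1 K c)) ∧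
    Dt (Phi2 K) =
      2 * (S.symm (Phi2 K) - S.symm (Phi1 K c) * (Phi2 K) ^ 2 - al K (-1) * Phi2 K) :=
  stmt_14_general K c S hSK hSal hSu1 hSu2 Dt hDadd hDmul hDK hDal hDu1 hDu2
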